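/- arXiv:2201.13375 — 6 statements merged into one kernel-verified Lean document; each statement's English description precedes it below -/
import Mathlib

section
/- Let n ≥ 1, let A ∈ ℝ^{n×n} be invertible, let b₀ ∈ ℝⁿ with b₀ ≥ 0 entrywise, and let η, k_i, k_p, μ, θ > 0 with r := μ/θ. Assume g₁ := −eₙᵀA⁻¹e₁ > 0 and g_n := −eₙᵀA⁻¹eₙ > 0, and set g₀ := −eₙᵀA⁻¹b₀ (so g₀ ≥ 0 under the sign assumptions). Then the quadratic polynomial P₁(z) := η g₁ k_i z² + (g₀ − r) η z − g_n k_p μ r has exactly one positive real root z₁*. Moreover, setting z₂* := μ/(η z₁*) and x* := −A⁻¹(e₁ k_i z₁* − eₙ r k_p z₂* + b₀), the triple (x*, z₁*, z₂*) satisfies the closed-loop equilibrium equations A x* + e₁ k_i z₁* − eₙ (eₙᵀx*) k_p z₂* + b₀ = 0, μ − η z₁* z₂* = 0, θ (eₙᵀx*) − η z₁* z₂* = 0, and eₙᵀx* = r; and any triple (x, z₁, z₂) ∈ ℝⁿ × ℝ_{>0} × ℝ satisfying these three equations equals (x*, z₁*, z₂*). -/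
/-!
At an equilibrium the second controller equation forces `η z₁ z₂ = μ`, the third then forces the
output `xₙ` to equal the set-point `r`, and the plant equation, solved with `A⁻¹`, expresses `xₙ`
linearly in the two control inputs. Substituting `z₂ = μ / (η z₁)` into `xₙ = r` and clearing the
denominator `η z₁` gives `P₁(z₁) = 0`. Since `P₁` has positive leading coefficient and negative
constant term, its two real roots have negative product, so exactly one of them is positive.
-/

open Matrix

theorem existsUnique_pos_quadratic_root {a c : ℝ} (b : ℝ) (ha : 0 < a) (hc : 0 < c) :
    ∃! z : ℝ, 0 < z ∧ a * z ^ 2 + b * z - c = 0 := by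
  have hdisc : 0 < b ^ 2 + 4 * a * c := by positivity
  set s := √(b ^ 2 + 4 * a * c)
  have hs : s ^ 2 = b ^ 2 + 4 * a * c := Real.sq_sqrt hdisc.le
  have hbs : b < s := by nlinarith [Real.sqrt_nonneg (b ^ 2 + 4 * a * c)]
  set z := (s - b) / (2 * a) with hz_def
  have hz : 0 < z := div_pos (by linarith) (by positivity)
  have hz_root : a * z ^ 2 + b * z - c = 0 := by
    rw [hz_def]
    field_simp
    linear_combination hs
  refine ⟨z, ⟨hz, hz_root⟩, ?_⟩
  rintro w ⟨hw, hw_root⟩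
  by_contra hne
  -- Vieta: two distinct roots would have product `-c / a < 0`.
  have hsum : a * (w + z) + b = 0 :=
    (mul_eq_zero.mp (by linear_combination hw_root - hz_root : (w - z) * (a * (w + z) + b) = 0)
      ).resolve_left (sub_ne_zero.mpr hne)
  nlinarith [mul_pos ha (mul_pos hw hz)]

theorem Matrix.mulVec_add_eq_zero_iff {ι R : Type*} [Fintype ι] [DecidableEq ι] [CommRing R]
    {A : Matrix ι ι R} (hA : IsUnit A) (x v : ι → R) :
    A *ᵥ x + v = 0 ↔ x = -(A⁻¹ *ᵥ v) := by
  have hdet : IsUnit A.det := (isUnit_iff_isUnit_det A).mp hA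
  rw [add_eq_zero_iff_eq_neg, ← mulVec_neg]
  constructor
  · intro h
    rw [← h, mulVec_mulVec, nonsing_inv_mul A hdet, one_mulVec]
  · rintro rfl
    rw [mulVec_mulVec, mul_nonsing_inv A hdet, one_mulVec]

theorem Matrix.mulVec_smul_single_sub_smul_single_add_apply {ι R : Type*} [Fintype ι]
    [DecidableEq ι] [CommRing R] (M : Matrix ι ι R) (α β : R) (i j k : ι) (b : ι → R) :
    (M *ᵥ (α • Pi.single i 1 - β • Pi.single j 1 + b)) k = α * M k i - β * M k j + (M *ᵥ b) k := by
  simp [mulVec_add, mulVec_sub, mulVec_smul, mulVec_single]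

section ClosedLoop

variable {n : ℕ} {A : Matrix (Fin (n+1)) (Fin (n+1)) ℝ} {b₀ : Fin (n+1) → ℝ}
  {η ki kp μ θ r g₀ g₁ gn : ℝ}

def IsClosedLoopEquilibrium (A : Matrix (Fin (n+1)) (Fin (n+1)) ℝ) (b₀ : Fin (n+1) → ℝ)
    (η ki kp μ θ : ℝ) (x : Fin (n+1) → ℝ) (z₁ z₂ : ℝ) : Prop :=
  A *ᵥ x + (ki * z₁) • (Pi.single 0 1 : Fin (n+1) → ℝ)
      - (kp * z₂ * x (Fin.last n)) • (Pi.single (Fin.last n) 1 : Fin (n+1) → ℝ) + b₀ = 0 ∧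
    μ - η * z₁ * z₂ = 0 ∧ θ * x (Fin.last n) - η * z₁ * z₂ = 0

theorem isClosedLoopEquilibrium_iff (hA : IsUnit A) {x : Fin (n+1) → ℝ} {z₁ z₂ : ℝ} :
    IsClosedLoopEquilibrium A b₀ η ki kp μ θ x z₁ z₂ ↔
      x = -(A⁻¹ *ᵥ ((ki * z₁) • (Pi.single 0 1 : Fin (n+1) → ℝ)
        - (kp * z₂ * x (Fin.last n)) • (Pi.single (Fin.last n) 1 : Fin (n+1) → ℝ) + b₀)) ∧
      η * z₁ * z₂ = μ ∧ θ * x (Fin.last n) = μ := by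
  rw [IsClosedLoopEquilibrium, ← mulVec_add_eq_zero_iff hA, add_sub_assoc, add_assoc]
  refine and_congr Iff.rfl ⟨fun ⟨h₁, h₂⟩ ↦ ⟨?_, ?_⟩, fun ⟨h₁, h₂⟩ ↦ ⟨?_, ?_⟩⟩ <;> linarith

theorem last_neg_inv_mulVec_input
    (hg₁ : g₁ = -(A⁻¹ (Fin.last n) 0)) (hgn : gn = -(A⁻¹ (Fin.last n) (Fin.last n)))
    (hg₀ : g₀ = -((A⁻¹ *ᵥ b₀) (Fin.last n))) (α β : ℝ) :
    (-(A⁻¹ *ᵥ (α • (Pi.single 0 1 : Fin (n+1) → ℝ)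
      - β • (Pi.single (Fin.last n) 1 : Fin (n+1) → ℝ) + b₀))) (Fin.last n)
      = g₁ * α - gn * β + g₀ := by
  rw [Pi.neg_apply, mulVec_smul_single_sub_smul_single_add_apply, hg₁, hgn, hg₀]
  ring

theorem setpoint_balance_iff_root {z₁ z₂ : ℝ} (hz : η * z₁ ≠ 0) (h : η * z₁ * z₂ = μ) :
    g₁ * (ki * z₁) - gn * (r * kp * z₂) + g₀ = r ↔
      η * g₁ * ki * z₁ ^ 2 + (g₀ - r) * η * z₁ - gn * kp * μ * r = 0 := by
  have key : (g₁ * (ki * z₁) - gn * (r * kp * z₂) + g₀ - r) * (η * z₁)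
      = η * g₁ * ki * z₁ ^ 2 + (g₀ - r) * η * z₁ - gn * kp * μ * r := by
    linear_combination (-(gn * kp * r)) * h
  rw [← key, mul_eq_zero, or_iff_left hz, sub_eq_zero]

theorem IsClosedLoopEquilibrium.last_eq {x : Fin (n+1) → ℝ} {z₁ z₂ : ℝ}
    (h : IsClosedLoopEquilibrium A b₀ η ki kp μ θ x z₁ z₂) (hθ : θ ≠ 0) (hr : r = μ / θ) :
    x (Fin.last n) = r := by
  obtain ⟨-, hμ, hθx⟩ := h
  rw [hr, eq_div_iff hθ]
  linarith

theorem isClosedLoopEquilibrium_iff_root (hA : IsUnit A) (hη : η ≠ 0) (hθ : θ ≠ 0)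
    (hr : r = μ / θ) (hg₁ : g₁ = -(A⁻¹ (Fin.last n) 0))
    (hgn : gn = -(A⁻¹ (Fin.last n) (Fin.last n))) (hg₀ : g₀ = -((A⁻¹ *ᵥ b₀) (Fin.last n)))
    {x : Fin (n+1) → ℝ} {z₁ z₂ : ℝ} (hz₁ : z₁ ≠ 0) :
    IsClosedLoopEquilibrium A b₀ η ki kp μ θ x z₁ z₂ ↔
      η * g₁ * ki * z₁ ^ 2 + (g₀ - r) * η * z₁ - gn * kp * μ * r = 0 ∧ z₂ = μ / (η * z₁) ∧
        x = -(A⁻¹ *ᵥ ((ki * z₁) • (Pi.single 0 1 : Fin (n+1) → ℝ)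
          - (r * kp * z₂) • (Pi.single (Fin.last n) 1 : Fin (n+1) → ℝ) + b₀)) := by
  have hηz₁ : η * z₁ ≠ 0 := mul_ne_zero hη hz₁
  have houtput := last_neg_inv_mulVec_input hg₁ hgn hg₀
  constructor
  · intro h
    have hxn := h.last_eq hθ hr
    obtain ⟨hx, hμ, -⟩ := (isClosedLoopEquilibrium_iff hA).mp h
    rw [hxn, show kp * z₂ * r = r * kp * z₂ by ring] at hx
    refine ⟨(setpoint_balance_iff_root hηz₁ hμ).mp ?_, (eq_div_iff hηz₁).mpr ?_, hx⟩
    · rw [← houtput, ← hx, hxn]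
    · rw [mul_comm, hμ]
  · rintro ⟨hroot, hz₂, hx⟩
    have hμ : η * z₁ * z₂ = μ := by rw [hz₂]; field_simp
    have hxn : x (Fin.last n) = r := by
      rw [hx, houtput]
      exact (setpoint_balance_iff_root hηz₁ hμ).mpr hroot
    refine (isClosedLoopEquilibrium_iff hA).mpr ⟨?_, hμ, ?_⟩
    · rwa [hxn, show kp * z₂ * r = r * kp * z₂ by ring]
    · rw [hxn, hr]
      field_simp

end ClosedLoop

theorem stmt0_general (n : ℕ) (A : Matrix (Fin (n+1)) (Fin (n+1)) ℝ) (hA : IsUnit A)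
    (b₀ : Fin (n+1) → ℝ)
    (η ki kp μ θ : ℝ) (hη : 0 < η) (hki : 0 < ki) (hkp : 0 < kp) (hμ : 0 < μ) (hθ : 0 < θ)
    (r g₀ g₁ gn : ℝ) (hr : r = μ / θ)
    (hg₁ : g₁ = -(A⁻¹ (Fin.last n) 0)) (hg₁pos : 0 < g₁)
    (hgn : gn = -(A⁻¹ (Fin.last n) (Fin.last n))) (hgnpos : 0 < gn)
    (hg₀ : g₀ = -((A⁻¹ *ᵥ b₀) (Fin.last n))) :
    ∃ z₁s : ℝ, 0 < z₁s ∧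
      η * g₁ * ki * z₁s ^ 2 + (g₀ - r) * η * z₁s - gn * kp * μ * r = 0 ∧
      (∀ z : ℝ, 0 < z → η * g₁ * ki * z ^ 2 + (g₀ - r) * η * z - gn * kp * μ * r = 0 → z = z₁s) ∧
      ∀ z₂s : ℝ, ∀ xs : Fin (n+1) → ℝ, z₂s = μ / (η * z₁s) →
        xs = -(A⁻¹ *ᵥ ((ki * z₁s) • (Pi.single 0 1 : Fin (n+1) → ℝ)
                - (r * kp * z₂s) • (Pi.single (Fin.last n) 1 : Fin (n+1) → ℝ) + b₀)) →
        (A *ᵥ xs + (ki * z₁s) • (Pi.single 0 1 : Fin (n+1) → ℝ)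
            - (kp * z₂s * xs (Fin.last n)) • (Pi.single (Fin.last n) 1 : Fin (n+1) → ℝ) + b₀ = 0) ∧
        μ - η * z₁s * z₂s = 0 ∧
        θ * xs (Fin.last n) - η * z₁s * z₂s = 0 ∧
        xs (Fin.last n) = r ∧
        ∀ (x : Fin (n+1) → ℝ) (z₁ z₂ : ℝ), 0 < z₁ →
          (A *ᵥ x + (ki * z₁) • (Pi.single 0 1 : Fin (n+1) → ℝ)
              - (kp * z₂ * x (Fin.last n)) • (Pi.single (Fin.last n) 1 : Fin (n+1) → ℝ) + b₀ = 0) →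
          μ - η * z₁ * z₂ = 0 →
          θ * x (Fin.last n) - η * z₁ * z₂ = 0 →
          x = xs ∧ z₁ = z₁s ∧ z₂ = z₂s := by
  have hr_pos : 0 < r := hr ▸ div_pos hμ hθ
  obtain ⟨z₁s, ⟨hz₁s, hroot⟩, huniq⟩ :=
    existsUnique_pos_quadratic_root (a := η * g₁ * ki) (c := gn * kp * μ * r) ((g₀ - r) * η)
      (by positivity) (by positivity)
  refine ⟨z₁s, hz₁s, hroot, fun z hz hPz ↦ huniq z ⟨hz, hPz⟩, fun z₂s xs hz₂s hxs ↦ ?_⟩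
  have hequil := (isClosedLoopEquilibrium_iff_root hA hη.ne' hθ.ne' hr hg₁ hgn hg₀
    hz₁s.ne').mpr ⟨hroot, hz₂s, hxs⟩
  refine ⟨hequil.1, hequil.2.1, hequil.2.2, hequil.last_eq hθ.ne' hr, ?_⟩
  intro x z₁ z₂ hz₁ h₁ h₂ h₃
  obtain ⟨hP, hz₂, hx⟩ := (isClosedLoopEquilibrium_iff_root hA hη.ne' hθ.ne' hr hg₁ hgn hg₀
    hz₁.ne').mp ⟨h₁, h₂, h₃⟩
  obtain rfl := huniq z₁ ⟨hz₁, hP⟩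
  obtain rfl : z₂ = z₂s := hz₂.trans hz₂s.symm
  exact ⟨hx.trans hxs.symm, rfl, rfl⟩

/-- Equilibrium analysis of the closed-loop AIRC system (Proposition 1 of the paper):
existence and uniqueness of the positive root of `P₁` and of the equilibrium triple. -/
theorem stmt0 (n : ℕ) (A : Matrix (Fin (n+1)) (Fin (n+1)) ℝ) (hA : IsUnit A)
    (b₀ : Fin (n+1) → ℝ) (hb₀ : ∀ i, 0 ≤ b₀ i)
    (η ki kp μ θ : ℝ) (hη : 0 < η) (hki : 0 < ki) (hkp : 0 < kp) (hμ : 0 < μ) (hθ : 0 < θ)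
    (r g₀ g₁ gn : ℝ) (hr : r = μ / θ)
    (hg₁ : g₁ = -(A⁻¹ (Fin.last n) 0)) (hg₁pos : 0 < g₁)
    (hgn : gn = -(A⁻¹ (Fin.last n) (Fin.last n))) (hgnpos : 0 < gn)
    (hg₀ : g₀ = -((A⁻¹ *ᵥ b₀) (Fin.last n))) :
    ∃ z₁s : ℝ, 0 < z₁s ∧
      η * g₁ * ki * z₁s ^ 2 + (g₀ - r) * η * z₁s - gn * kp * μ * r = 0 ∧
      (∀ z : ℝ, 0 < z → η * g₁ * ki * z ^ 2 + (g₀ - r) * η * z - gn * kp * μ * r = 0 → z = z₁s) ∧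
      ∀ z₂s : ℝ, ∀ xs : Fin (n+1) → ℝ, z₂s = μ / (η * z₁s) →
        xs = -(A⁻¹ *ᵥ ((ki * z₁s) • (Pi.single 0 1 : Fin (n+1) → ℝ)
                - (r * kp * z₂s) • (Pi.single (Fin.last n) 1 : Fin (n+1) → ℝ) + b₀)) →
        (A *ᵥ xs + (ki * z₁s) • (Pi.single 0 1 : Fin (n+1) → ℝ)
            - (kp * z₂s * xs (Fin.last n)) • (Pi.single (Fin.last n) 1 : Fin (n+1) → ℝ) + b₀ = 0) ∧
        μ - η * z₁s * z₂s = 0 ∧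
        θ * xs (Fin.last n) - η * z₁s * z₂s = 0 ∧
        xs (Fin.last n) = r ∧
        ∀ (x : Fin (n+1) → ℝ) (z₁ z₂ : ℝ), 0 < z₁ →
          (A *ᵥ x + (ki * z₁) • (Pi.single 0 1 : Fin (n+1) → ℝ)
              - (kp * z₂ * x (Fin.last n)) • (Pi.single (Fin.last n) 1 : Fin (n+1) → ℝ) + b₀ = 0) →
          μ - η * z₁ * z₂ = 0 →
          θ * x (Fin.last n) - η * z₁ * z₂ = 0 →
          x = xs ∧ z₁ = z₁s ∧ z₂ = z₂s :=
  stmt0_general n A hA b₀ η ki kp μ θ hη hki hkp hμ hθ r g₀ g₁ gn hr hg₁ hg₁pos hgn hgnpos hg₀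
end

section
/- Let g₁ > 0, g_n > 0, g₀ ≥ 0, and k_i, k_p, μ, θ > 0 with r := μ/θ > 0. For each η > 0 let z₁*(η) denote the unique positive real root of the quadratic P₁(z) := η g₁ k_i z² + (g₀ − r) η z − g_n k_p μ r. Then: (1) if r > g₀, then z₁*(η) → (r − g₀)/(g₁ k_i) and μ/(η z₁*(η)) → 0 as η → ∞; (2) if r < g₀, then z₁*(η) → 0 and μ/(η z₁*(η)) → (g₀ − r)/(g_n r k_p) as η → ∞. -/
open Filter Topology

/-!
Dividing `P₁` by `η` shows that `z₁*(η)` is the positive root of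
`g₁ kᵢ z² + (g₀ - r) z - gₙ kₚ μ r / η`, whose constant term vanishes as `η → ∞`; by the
quadratic formula `z₁*` tends to the larger root `(-(g₀ - r) + |g₀ - r|) / (2 g₁ kᵢ)` of the
limiting quadratic. The factorisation `η z (g₁ kᵢ z + g₀ - r) = gₙ kₚ μ r` then gives
`1 / (η z₁*)`, hence `z₂*`, as a continuous function of `z₁*`.
-/

section QuadraticRoot

variable {a b c : ℝ}

theorem eq_quadratic_root_of_pos (ha : 0 < a) (hc : 0 ≤ c) {z : ℝ} (hz : 0 < z)
    (h : a * z ^ 2 + b * z - c = 0) : z = (-b + √(b ^ 2 + 4 * a * c)) / (2 * a) := by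
  have hnonneg : 0 ≤ 2 * a * z + b := by nlinarith
  have hsq : b ^ 2 + 4 * a * c = (2 * a * z + b) ^ 2 := by linear_combination (-4 * a) * h
  rw [hsq, Real.sqrt_sq hnonneg]
  field_simp
  ring

theorem tendsto_pos_root_of_mul_eq (ha : 0 < a) (hc : 0 ≤ c) {z : ℝ → ℝ}
    (hz : ∀ η, 0 < η → 0 < z η ∧ η * z η * (a * z η + b) = c) :
    Tendsto z atTop (𝓝 ((-b + |b|) / (2 * a))) := by
  have hroot : ∀ η, 0 < η → (-b + √(b ^ 2 + 4 * a * (c / η))) / (2 * a) = z η := by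
    intro η hη
    obtain ⟨hzpos, heq⟩ := hz η hη
    refine (eq_quadratic_root_of_pos ha (div_nonneg hc hη.le) hzpos ?_).symm
    field_simp
    linear_combination heq
  have hconst : Tendsto (fun η : ℝ => b ^ 2 + 4 * a * (c / η)) atTop (𝓝 (b ^ 2)) := by
    simpa using (tendsto_const_nhds.div_atTop tendsto_id).const_mul (4 * a) |>.const_add (b ^ 2)
  have hsqrt := (Real.continuous_sqrt.tendsto _).comp hconst
  rw [Real.sqrt_sq_eq_abs] at hsqrt
  refine ((hsqrt.const_add (-b)).div_const (2 * a)).congr' ?_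
  filter_upwards [eventually_gt_atTop 0] with η hη using hroot η hη

theorem tendsto_inv_mul_of_mul_eq (hc : c ≠ 0) {z : ℝ → ℝ}
    (hz : ∀ η, 0 < η → η * z η * (a * z η + b) = c) {L : ℝ} (hL : Tendsto z atTop (𝓝 L)) :
    Tendsto (fun η => (η * z η)⁻¹) atTop (𝓝 ((a * L + b) / c)) := by
  refine (((hL.const_mul a).add_const b).div_const c).congr' ?_
  filter_upwards [eventually_gt_atTop 0] with η hη
  have hne : η * z η * (a * z η + b) ≠ 0 := hz η hη ▸ hc
  rw [← hz η hη, div_mul_cancel_right₀ (right_ne_zero_of_mul hne)]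

end QuadraticRoot

theorem stmt1_general (g₀ g₁ gn ki kp μ r : ℝ)
    (hg₁ : 0 < g₁) (hgn : 0 < gn)
    (hki : 0 < ki) (hkp : 0 < kp) (hμ : 0 < μ) (hrpos : 0 < r)
    (z : ℝ → ℝ)
    (hz : ∀ η : ℝ, 0 < η → 0 < z η ∧
      η * g₁ * ki * (z η) ^ 2 + (g₀ - r) * η * (z η) - gn * kp * μ * r = 0) :
    (r > g₀ → Tendsto z atTop (𝓝 ((r - g₀) / (g₁ * ki))) ∧
      Tendsto (fun η : ℝ => μ / (η * z η)) atTop (𝓝 0)) ∧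
    (r < g₀ → Tendsto z atTop (𝓝 0) ∧
      Tendsto (fun η : ℝ => μ / (η * z η)) atTop (𝓝 ((g₀ - r) / (gn * r * kp)))) := by
  have hc : 0 < gn * kp * μ * r := by positivity
  have hfac : ∀ η, 0 < η →
      0 < z η ∧ η * z η * (g₁ * ki * z η + (g₀ - r)) = gn * kp * μ * r := fun η hη =>
    ⟨(hz η hη).1, by linear_combination (hz η hη).2⟩
  have hzlim := tendsto_pos_root_of_mul_eq (mul_pos hg₁ hki) hc.le hfac
  have hratio := (tendsto_inv_mul_of_mul_eq hc.ne' (fun η hη => (hfac η hη).2) hzlim).const_mul μ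
  simp only [← div_eq_mul_inv] at hratio
  refine ⟨fun hgt => ?_, fun hlt => ?_⟩
  · rw [abs_of_neg (sub_neg.2 hgt)] at hzlim hratio
    constructor
    · convert hzlim using 2; field_simp; ring
    · convert hratio using 2; field_simp; ring
  · rw [abs_of_pos (sub_pos.2 hlt)] at hzlim hratio
    constructor
    · convert hzlim using 2; ring
    · convert hratio using 2; field_simp; ring

/-- Switching behavior of the AIRC equilibrium in the strong binding limit η → ∞
(Proposition 2 of the paper, cases r > g₀ and r < g₀). -/
theorem stmt1 (g₀ g₁ gn ki kp μ θ r : ℝ)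
    (hg₁ : 0 < g₁) (hgn : 0 < gn) (hg₀ : 0 ≤ g₀)
    (hki : 0 < ki) (hkp : 0 < kp) (hμ : 0 < μ) (hθ : 0 < θ)
    (hr : r = μ / θ) (hrpos : 0 < r)
    (z : ℝ → ℝ)
    (hz : ∀ η : ℝ, 0 < η → 0 < z η ∧
      η * g₁ * ki * (z η) ^ 2 + (g₀ - r) * η * (z η) - gn * kp * μ * r = 0) :
    (r > g₀ → Tendsto z atTop (𝓝 ((r - g₀) / (g₁ * ki))) ∧
      Tendsto (fun η : ℝ => μ / (η * z η)) atTop (𝓝 0)) ∧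
    (r < g₀ → Tendsto z atTop (𝓝 0) ∧
      Tendsto (fun η : ℝ => μ / (η * z η)) atTop (𝓝 ((g₀ - r) / (gn * r * kp)))) :=
  stmt1_general g₀ g₁ gn ki kp μ r hg₁ hgn hki hkp hμ hrpos z hz
end

section
/- Let n ≥ 1, let A ∈ ℝ^{n×n} be invertible, b₀ ∈ ℝⁿ with b₀ ≥ 0, and let η, k_p, μ, θ > 0 with r := μ/θ > 0. Set g₀ := −eₙᵀA⁻¹b₀ and g_n := −eₙᵀA⁻¹eₙ, and assume g_n > 0. Consider the equilibrium equations of the p-type antithetic integral controller: A x − eₙ (eₙᵀx) k_p z₂ + b₀ = 0, μ − k_p η z₁ z₂ = 0, θ (eₙᵀx) − k_p η z₁ z₂ = 0. These equations admit a solution (x, z₁, z₂) ∈ ℝⁿ × ℝ_{>0} × ℝ_{>0} if and only if r < g₀; and in that case the solution is unique and given by x* = −A⁻¹(−eₙ r u* + b₀), z₁* = μ/(η u*), z₂* = u*/k_p, where u* := (g₀ − r)/(g_n r). -/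
/-!
The two controller equations force `e_jᵀ x = μ / θ = r`. Solving the linear part through `A⁻¹`
and reading off the `j`-th coordinate gives `r = g₀ - r gn (kp z₂)`, which is linear in the loop
gain `u = kp z₂` and so determines it as `u* = (g₀ - r) / (gn r)`; then `z₁` follows from
`μ = η z₁ u*`. A positive `z₂` therefore exists exactly when `u* > 0`, i.e. when `r < g₀`.
-/

open Matrix

namespace Matrix

variable {ι : Type*} [Fintype ι] [DecidableEq ι]

theorem mulVec_eq_iff_eq_inv_mulVec {A : Matrix ι ι ℝ} (hA : IsUnit A) {x y : ι → ℝ} :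
    A *ᵥ x = y ↔ x = A⁻¹ *ᵥ y := by
  have hdet := (isUnit_iff_isUnit_det A).mp hA
  constructor
  · rintro rfl
    rw [mulVec_mulVec, nonsing_inv_mul A hdet, one_mulVec]
  · rintro rfl
    rw [mulVec_mulVec, mul_nonsing_inv A hdet, one_mulVec]

theorem mulVec_smul_single_add_apply (M : Matrix ι ι ℝ) (c : ℝ) (b : ι → ℝ) (i j : ι) :
    (M *ᵥ (c • Pi.single j 1 + b)) i = c * M i j + (M *ᵥ b) i := by
  simp [mulVec_add, mulVec_smul]

end Matrix

section AntitheticIntegralController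

variable {ι : Type*} [Fintype ι] [DecidableEq ι]

def IsAICEquilibrium (A : Matrix ι ι ℝ) (b₀ : ι → ℝ) (j : ι) (η kp μ θ : ℝ)
    (x : ι → ℝ) (z₁ z₂ : ℝ) : Prop :=
  A *ᵥ x - (kp * z₂ * x j) • (Pi.single j 1 : ι → ℝ) + b₀ = 0 ∧
    μ - kp * η * z₁ * z₂ = 0 ∧
    θ * x j - kp * η * z₁ * z₂ = 0

theorem isAICEquilibrium_iff {A : Matrix ι ι ℝ} (hA : IsUnit A) {b₀ : ι → ℝ} {j : ι}
    {η kp μ θ r g₀ gn : ℝ} (hη : η ≠ 0) (hkp : kp ≠ 0) (hμ : μ ≠ 0) (hθ : θ ≠ 0)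
    (hr : r = μ / θ) (hg₀ : g₀ = -((A⁻¹ *ᵥ b₀) j)) (hgn : gn = -(A⁻¹ j j)) (hgn₀ : gn ≠ 0)
    {x : ι → ℝ} {z₁ z₂ : ℝ} (hz₂ : z₂ ≠ 0) :
    IsAICEquilibrium A b₀ j η kp μ θ x z₁ z₂ ↔
      x = -(A⁻¹ *ᵥ ((-(r * ((g₀ - r) / (gn * r)))) • (Pi.single j 1 : ι → ℝ) + b₀)) ∧
        z₁ = μ / (η * ((g₀ - r) / (gn * r))) ∧
        z₂ = ((g₀ - r) / (gn * r)) / kp := by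
  set u := (g₀ - r) / (gn * r) with hu
  clear_value u
  have hr₀ : r ≠ 0 := hr ▸ div_ne_zero hμ hθ
  have hlinear : ∀ c : ℝ, A *ᵥ x - c • (Pi.single j 1 : ι → ℝ) + b₀ = 0 ↔
      x = -(A⁻¹ *ᵥ ((-c) • (Pi.single j 1 : ι → ℝ) + b₀)) := fun c ↦ by
    rw [← mulVec_neg, ← mulVec_eq_iff_eq_inv_mulVec hA, eq_neg_iff_add_eq_zero, neg_smul,
      ← add_assoc, ← sub_eq_add_neg]
  have hxj : ∀ c : ℝ, (-(A⁻¹ *ᵥ ((-c) • (Pi.single j 1 : ι → ℝ) + b₀))) j = g₀ - c * gn :=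
    fun c ↦ by rw [Pi.neg_apply, mulVec_smul_single_add_apply, hgn, hg₀]; ring
  -- the `j`-th equation of the linear part pins the loop gain `kp * z₂` to `u`
  have hgain : r = g₀ - r * (kp * z₂) * gn ↔ kp * z₂ = u := by
    rw [hu, eq_div_iff (mul_ne_zero hgn₀ hr₀)]
    constructor <;> intro h <;> linear_combination h
  constructor
  · rintro ⟨hlin, hz, hx⟩
    have hxr : x j = r := by
      rw [hr, eq_div_iff hθ]; linear_combination hx - hz
    rw [hlinear, hxr] at hlin
    have hlin_j := congrFun hlin j
    rw [hxj, hxr] at hlin_j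
    have hkz : kp * z₂ = u := hgain.mp (by linear_combination hlin_j)
    have hu₀ : u ≠ 0 := hkz ▸ mul_ne_zero hkp hz₂
    refine ⟨?_, ?_, ?_⟩
    · rw [hlin, ← hkz, mul_comm r]
    · rw [eq_div_iff (mul_ne_zero hη hu₀)]; linear_combination (-η * z₁) * hkz - hz
    · rw [eq_div_iff hkp]; linear_combination hkz
  · rintro ⟨hx, hz₁, hz₂u⟩
    have hkz : kp * z₂ = u := by rw [hz₂u]; field_simp
    have hxr : x j = r := by rw [hx, hxj, ← hkz]; exact (hgain.mpr hkz).symm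
    refine ⟨?_, ?_, ?_⟩
    · rw [hlinear, hxr, hkz, mul_comm u, hx]
    · rw [hz₁, ← hkz]; field_simp; ring
    · rw [hxr, hr, hz₁, ← hkz]; field_simp; ring

end AntitheticIntegralController

theorem stmt3_general (n : ℕ) (A : Matrix (Fin (n+1)) (Fin (n+1)) ℝ) (hA : IsUnit A)
    (b₀ : Fin (n+1) → ℝ)
    (η kp μ θ : ℝ) (hη : 0 < η) (hkp : 0 < kp) (hμ : 0 < μ) (hθ : 0 < θ)
    (r g₀ gn : ℝ) (hr : r = μ / θ) (hrpos : 0 < r)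
    (hg₀ : g₀ = -((A⁻¹ *ᵥ b₀) (Fin.last n)))
    (hgn : gn = -(A⁻¹ (Fin.last n) (Fin.last n))) (hgnpos : 0 < gn) :
    ((∃ (x : Fin (n+1) → ℝ) (z₁ z₂ : ℝ), 0 < z₁ ∧ 0 < z₂ ∧
        (A *ᵥ x - (kp * z₂ * x (Fin.last n)) • (Pi.single (Fin.last n) 1 : Fin (n+1) → ℝ)
          + b₀ = 0) ∧
        μ - kp * η * z₁ * z₂ = 0 ∧
        θ * x (Fin.last n) - kp * η * z₁ * z₂ = 0) ↔ r < g₀) ∧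
    (∀ (x : Fin (n+1) → ℝ) (z₁ z₂ : ℝ), 0 < z₁ → 0 < z₂ →
      (A *ᵥ x - (kp * z₂ * x (Fin.last n)) • (Pi.single (Fin.last n) 1 : Fin (n+1) → ℝ)
        + b₀ = 0) →
      μ - kp * η * z₁ * z₂ = 0 →
      θ * x (Fin.last n) - kp * η * z₁ * z₂ = 0 →
      x = -(A⁻¹ *ᵥ ((-(r * ((g₀ - r) / (gn * r)))) • (Pi.single (Fin.last n) 1 : Fin (n+1) → ℝ)
          + b₀)) ∧
      z₁ = μ / (η * ((g₀ - r) / (gn * r))) ∧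
      z₂ = ((g₀ - r) / (gn * r)) / kp) := by
  have hiff (x : Fin (n+1) → ℝ) (z₁ z₂ : ℝ) (hz₂ : 0 < z₂) :=
    isAICEquilibrium_iff (x := x) (z₁ := z₁) hA hη.ne' hkp.ne' hμ.ne' hθ.ne' hr hg₀ hgn
      hgnpos.ne' hz₂.ne'
  have hgr : 0 < gn * r := mul_pos hgnpos hrpos
  refine ⟨⟨?_, fun hlt ↦ ?_⟩,
    fun x z₁ z₂ _ hz₂ h₁ h₂ h₃ ↦ (hiff x z₁ z₂ hz₂).mp ⟨h₁, h₂, h₃⟩⟩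
  · rintro ⟨x, z₁, z₂, -, hz₂, hequil⟩
    obtain ⟨-, -, hz₂u⟩ := (hiff x z₁ z₂ hz₂).mp hequil
    rw [hz₂u, div_pos_iff_of_pos_right hkp, div_pos_iff_of_pos_right hgr] at hz₂
    exact sub_pos.mp hz₂
  · have hu : 0 < (g₀ - r) / (gn * r) := div_pos (sub_pos.mpr hlt) hgr
    have hz₂ : 0 < (g₀ - r) / (gn * r) / kp := div_pos hu hkp
    exact ⟨_, _, _, div_pos hμ (mul_pos hη hu), hz₂, (hiff _ _ _ hz₂).mpr ⟨rfl, rfl, rfl⟩⟩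

/-- Equilibrium of the p-type AIC closed-loop system (Proposition 3 of the paper):
a positive equilibrium exists iff r < g₀, in which case it is unique and explicit. -/
theorem stmt3 (n : ℕ) (A : Matrix (Fin (n+1)) (Fin (n+1)) ℝ) (hA : IsUnit A)
    (b₀ : Fin (n+1) → ℝ) (hb₀ : ∀ i, 0 ≤ b₀ i)
    (η kp μ θ : ℝ) (hη : 0 < η) (hkp : 0 < kp) (hμ : 0 < μ) (hθ : 0 < θ)
    (r g₀ gn : ℝ) (hr : r = μ / θ) (hrpos : 0 < r)
    (hg₀ : g₀ = -((A⁻¹ *ᵥ b₀) (Fin.last n)))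
    (hgn : gn = -(A⁻¹ (Fin.last n) (Fin.last n))) (hgnpos : 0 < gn) :
    ((∃ (x : Fin (n+1) → ℝ) (z₁ z₂ : ℝ), 0 < z₁ ∧ 0 < z₂ ∧
        (A *ᵥ x - (kp * z₂ * x (Fin.last n)) • (Pi.single (Fin.last n) 1 : Fin (n+1) → ℝ)
          + b₀ = 0) ∧
        μ - kp * η * z₁ * z₂ = 0 ∧
        θ * x (Fin.last n) - kp * η * z₁ * z₂ = 0) ↔ r < g₀) ∧
    (∀ (x : Fin (n+1) → ℝ) (z₁ z₂ : ℝ), 0 < z₁ → 0 < z₂ →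
      (A *ᵥ x - (kp * z₂ * x (Fin.last n)) • (Pi.single (Fin.last n) 1 : Fin (n+1) → ℝ)
        + b₀ = 0) →
      μ - kp * η * z₁ * z₂ = 0 →
      θ * x (Fin.last n) - kp * η * z₁ * z₂ = 0 →
      x = -(A⁻¹ *ᵥ ((-(r * ((g₀ - r) / (gn * r)))) • (Pi.single (Fin.last n) 1 : Fin (n+1) → ℝ)
          + b₀)) ∧
      z₁ = μ / (η * ((g₀ - r) / (gn * r))) ∧
      z₂ = ((g₀ - r) / (gn * r)) / kp) :=
  stmt3_general n A hA b₀ η kp μ θ hη hkp hμ hθ r g₀ gn hr hrpos hg₀ hgn hgnpos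
end

section
/- Let n ≥ 1, Ā ∈ ℝ^{n×n} be Metzler and Hurwitz stable, and let k_p, μ, r, u* > 0. Assume furthermore that the (n+1)×(n+1) matrix [[Ā, −k_p r eₙ], [eₙᵀ, 0]] is Hurwitz stable. For η > 0 define M(η) := [[Ā, 0, −k_p r eₙ], [0, −η u*, −μ k_p/u*], [eₙᵀ, −η u*, −μ k_p/u*]]. Then there exists N > 0 such that M(η) is Hurwitz stable for all η > N. -/
open Matrix

/-- A real square matrix is Metzler if all its off-diagonal entries are nonnegative. -/
def Metzler {m : Type*} [Fintype m] (M : Matrix m m ℝ) : Prop :=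
  ∀ i j, i ≠ j → 0 ≤ M i j

/-- A real square matrix is Hurwitz stable if all its (complex) eigenvalues have
negative real part. -/
def HurwitzStable {m : Type*} [Fintype m] [DecidableEq m] (M : Matrix m m ℝ) : Prop :=
  ∀ z ∈ spectrum ℂ (M.map Complex.ofReal), z.re < 0

/-! Let `z` be an eigenvalue of `M(η)` with `Re z ≥ 0` and eigenvector `(x, z₀, z₁)`. If `z₁ = 0`
then `z₀ = 0` and `z` is an eigenvalue of `Ā`, which is impossible. Otherwise, scaling to `z₁ = 1`
gives `Ā y - k_p r eₙ = z y` and `yₙ = z + ε` with `ε = z c / (z + η u*)`, `c = μ k_p / u*`.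
Thus `(z - M_red) (y, 1) = -ε e_{n+1}`, i.e. `ε G(z) = -1` for the corner entry `G(z)` of the
resolvent of the reduced matrix `M_red`. The first equation confines `z` to a bounded set
(since `|ε| ≤ c`), on which `G` is bounded because `M_red` is Hurwitz, whereas
`|ε| ≤ |z| c / (η u*) → 0` as `η → ∞`. -/

lemma Matrix.mem_spectrum_iff_exists_mulVec_eq_smul {m K : Type*} [Fintype m] [DecidableEq m]
    [Field K] (A : Matrix m m K) (z : K) : z ∈ spectrum K A ↔ ∃ v ≠ 0, A *ᵥ v = z • v := by
  rw [spectrum.mem_iff, Algebra.algebraMap_eq_smul_one, Matrix.isUnit_iff_isUnit_det,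
    isUnit_iff_ne_zero, not_not, ← Matrix.exists_mulVec_eq_zero_iff]
  simp only [Matrix.sub_mulVec, Matrix.smul_mulVec, Matrix.one_mulVec, sub_eq_zero, eq_comm]

lemma Matrix.notMem_spectrum_iff_det_ne_zero {m K : Type*} [Fintype m] [DecidableEq m] [Field K]
    (A : Matrix m m K) (z : K) : z ∉ spectrum K A ↔ (z • 1 - A).det ≠ 0 := by
  rw [spectrum.mem_iff, not_not, Algebra.algebraMap_eq_smul_one, Matrix.isUnit_iff_isUnit_det,
    isUnit_iff_ne_zero]

variable {m R : Type*}

def borderedMatrix [Zero R] (A : Matrix m m R) (b e : m → R) :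
    Matrix (m ⊕ Fin 1) (m ⊕ Fin 1) R :=
  fromBlocks A (of fun i _ => b i) (of fun _ j => e j) 0

/-- `M(η)` of the paper is `closedLoopMatrix Ā (-(k_p r) • eₙ) eₙ (η u*) (μ k_p / u*)`, and the
reduced matrix is `borderedMatrix Ā (-(k_p r) • eₙ) eₙ`. -/
def closedLoopMatrix [Zero R] [Neg R] (A : Matrix m m R) (b e : m → R) (s c : R) :
    Matrix (m ⊕ Fin 2) (m ⊕ Fin 2) R :=
  fromBlocks A (of fun i j => if j = 1 then b i else 0) (of fun i j => if i = 1 then e j else 0)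
    !![-s, -c; -s, -c]

section

variable {R' : Type*} [Ring R] [Ring R'] (f : R →+* R')

lemma borderedMatrix_map (A : Matrix m m R) (b e : m → R) :
    (borderedMatrix A b e).map f = borderedMatrix (A.map f) (f ∘ b) (f ∘ e) := by
  simp only [borderedMatrix, fromBlocks_map]
  congr 1; ext; simp

lemma closedLoopMatrix_map (A : Matrix m m R) (b e : m → R) (s c : R) :
    (closedLoopMatrix A b e s c).map f =
      closedLoopMatrix (A.map f) (f ∘ b) (f ∘ e) (f s) (f c) := by
  simp only [closedLoopMatrix, fromBlocks_map]
  congr 1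
  · ext i j; simp [apply_ite f]
  · ext i j; simp [apply_ite f]
  · ext i j; fin_cases i <;> fin_cases j <;> simp

end

lemma closedLoopMatrix_eigenvector_cases {K : Type*} [Fintype m] [Field K] {A : Matrix m m K}
    {b e : m → K} {s c z : K} {v : m ⊕ Fin 2 → K}
    (hv : closedLoopMatrix A b e s c *ᵥ v = z • v) (hv0 : v ≠ 0) (hzs : z + s ≠ 0) :
    (∃ x ≠ 0, A *ᵥ x = z • x) ∨ ∃ y, A *ᵥ y + b = z • y ∧ e ⬝ᵥ y = z + z * c / (z + s) := by
  set x : m → K := v ∘ Sum.inl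
  have hv_elim : v = Sum.elim x (v ∘ Sum.inr) := by ext (i | i) <;> rfl
  rw [hv_elim, closedLoopMatrix, fromBlocks_mulVec] at hv
  have hx : A *ᵥ x + v (.inr 1) • b = z • x := by
    ext i
    simpa [mulVec, dotProduct, Fin.sum_univ_two, mul_comm] using congrFun hv (.inl i)
  have h0 : -s * v (.inr 0) - c * v (.inr 1) = z * v (.inr 0) := by
    simpa [mulVec, dotProduct, vecHead, Fin.sum_univ_two, sub_eq_add_neg] using
      congrFun hv (.inr 0)
  have h1 : e ⬝ᵥ x - s * v (.inr 0) - c * v (.inr 1) = z * v (.inr 1) := by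
    simpa [mulVec, dotProduct, vecHead, vecTail, Fin.sum_univ_two, sub_eq_add_neg, add_assoc] using
      congrFun hv (.inr 1)
  by_cases hz1 : v (.inr 1) = 0
  · have hz0 : v (.inr 0) = 0 := by
      refine (mul_eq_zero.mp ?_).resolve_left hzs
      linear_combination -h0 - c * hz1
    refine .inl ⟨x, fun hx0 => hv0 ?_, by simpa [hz1] using hx⟩
    rw [hv_elim, hx0]
    ext (i | i)
    · rfl
    · fin_cases i <;> assumption
  · refine .inr ⟨(v (.inr 1))⁻¹ • x, ?_, ?_⟩
    · rw [mulVec_smul, smul_comm z, ← hx, smul_add, inv_smul_smul₀ hz1]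
    · rw [dotProduct_smul, smul_eq_mul]
      field_simp
      -- the last two rows give `e ⬝ᵥ x = z (z₁ - z₀)` and `(z + s) z₀ = -c z₁`
      linear_combination (z + s) * (h1 - h0) + z * h0

lemma inv_smul_one_sub_borderedMatrix_inr_inr_mul {K : Type*} [Fintype m] [DecidableEq m]
    [Field K] {A : Matrix m m K} {b e y : m → K} {z ε : K} (hy : A *ᵥ y + b = z • y)
    (he : e ⬝ᵥ y = z + ε) (hz : IsUnit (z • 1 - borderedMatrix A b e).det) :
    (z • 1 - borderedMatrix A b e)⁻¹ (.inr 0) (.inr 0) * ε = -1 := by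
  set w : m ⊕ Fin 1 → K := Sum.elim y 1
  have hw : (z • 1 - borderedMatrix A b e) *ᵥ w = Pi.single (.inr 0) (-ε) := by
    rw [sub_mulVec, smul_mulVec, one_mulVec, borderedMatrix, fromBlocks_mulVec]
    ext (i | i)
    · simpa [w, mulVec, dotProduct, sub_eq_zero] using (congrFun hy i).symm
    · fin_cases i
      simp [w, mulVec, he]
  have hw1 :
      w (.inr 0) = ((z • 1 - borderedMatrix A b e)⁻¹ *ᵥ Pi.single (.inr 0) (-ε)) (.inr 0) := by
    rw [← hw, mulVec_mulVec, nonsing_inv_mul _ hz, one_mulVec]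
  simp only [w, mulVec, dotProduct_single, Sum.elim_inr, Pi.one_apply] at hw1
  linear_combination hw1

lemma IsCompact.exists_bound_inv_smul_one_sub_apply {𝕜 : Type*} [Fintype m] [DecidableEq m]
    [NormedField 𝕜] {S : Set 𝕜} (hS : IsCompact S) (M : Matrix m m 𝕜)
    (hSM : ∀ z ∈ S, z ∉ spectrum 𝕜 M) (i j : m) :
    ∃ C, ∀ z ∈ S, ‖(z • 1 - M)⁻¹ i j‖ ≤ C := by
  refine hS.exists_bound_of_continuousOn fun z hz => ContinuousAt.continuousWithinAt ?_
  have hdet := (M.notMem_spectrum_iff_det_ne_zero z).mp (hSM z hz)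
  have hinv : ContinuousAt Inv.inv (z • 1 - M) :=
    continuousAt_matrix_inv _ (by rw [Ring.inverse_eq_inv']; exact continuousAt_inv₀ hdet)
  have hsub : Continuous fun w : 𝕜 => w • (1 : Matrix m m 𝕜) - M := by fun_prop
  exact (continuous_id.matrix_elem i j).continuousAt.comp (hinv.comp (x := z) hsub.continuousAt)

lemma norm_dotProduct_le {𝕜 : Type*} [Fintype m] [NormedField 𝕜] (e y : m → 𝕜) :
    ‖e ⬝ᵥ y‖ ≤ (∑ i, ‖e i‖) * ‖y‖ := by
  rw [Finset.sum_mul]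
  refine (norm_sum_le _ _).trans (Finset.sum_le_sum fun i _ => ?_)
  rw [norm_mul]
  gcongr
  exact norm_le_pi_norm y i

section

attribute [local instance] Matrix.linftyOpNormedAddCommGroup

lemma exists_norm_le_of_mulVec_add_eq_smul {𝕜 : Type*} [Fintype m] [NormedField 𝕜]
    (A : Matrix m m 𝕜) (b e : m → 𝕜) (γ : ℝ) :
    ∃ R, ∀ (z : 𝕜) (y : m → 𝕜), A *ᵥ y + b = z • y → ‖e ⬝ᵥ y - z‖ ≤ γ → ‖z‖ ≤ R := by
  refine ⟨‖A‖ + γ + (∑ i, ‖e i‖) * ‖b‖ + 1, fun z y hy he => ?_⟩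
  have hAy : ‖z‖ * ‖y‖ ≤ ‖A‖ * ‖y‖ + ‖b‖ := by
    rw [← norm_smul, ← hy]
    exact (norm_add_le _ _).trans (by gcongr; exact linfty_opNorm_mulVec A y)
  have hey : ‖z‖ - γ ≤ (∑ i, ‖e i‖) * ‖y‖ := by
    have := norm_sub_norm_le z (e ⬝ᵥ y)
    rw [norm_sub_rev] at this
    linarith [norm_dotProduct_le e y]
  have hγ : 0 ≤ γ := (norm_nonneg _).trans he
  have hE : 0 ≤ ∑ i, ‖e i‖ := Finset.sum_nonneg fun i _ => norm_nonneg (e i)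
  by_contra! hz
  have hzA : 1 ≤ ‖z‖ - ‖A‖ := by nlinarith [mul_nonneg hE (norm_nonneg b)]
  have hyb : ‖y‖ ≤ ‖b‖ := by nlinarith [mul_le_mul_of_nonneg_right hzA (norm_nonneg y)]
  linarith [mul_le_mul_of_nonneg_left hyb hE, norm_nonneg A]

end

lemma Complex.norm_mul_div_add_ofReal_le {z : ℂ} (hz : 0 ≤ z.re) {s : ℝ} (hs : 0 < s) (c : ℂ) :
    ‖z * c / (z + s)‖ ≤ ‖c‖ ∧ s * ‖z * c / (z + s)‖ ≤ ‖z‖ * ‖c‖ := by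
  have hs_le : s ≤ ‖z + s‖ := le_trans (by simp [hz]) (Complex.re_le_norm (z + s))
  have hz_le : ‖z‖ ≤ ‖z + s‖ := by
    rw [← sq_le_sq₀ (norm_nonneg _) (norm_nonneg _), Complex.sq_norm, Complex.sq_norm,
      Complex.normSq_apply, Complex.normSq_apply]
    simp only [Complex.add_re, Complex.ofReal_re, Complex.add_im, Complex.ofReal_im, add_zero]
    nlinarith
  have hpos : 0 < ‖z + s‖ := hs.trans_le hs_le
  rw [norm_div, norm_mul, div_le_iff₀ hpos, mul_div_assoc', div_le_iff₀ hpos]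
  constructor <;> nlinarith [norm_nonneg z, norm_nonneg c,
    mul_nonneg (norm_nonneg z) (norm_nonneg c)]

theorem exists_hurwitzStable_closedLoopMatrix [Fintype m] [DecidableEq m] (A : Matrix m m ℝ)
    (b e : m → ℝ) (c : ℝ) (hA : HurwitzStable A) (hred : HurwitzStable (borderedMatrix A b e)) :
    ∃ S > 0, ∀ s, S < s → HurwitzStable (closedLoopMatrix A b e s c) := by
  set Mred := borderedMatrix (A.map Complex.ofReal) (Complex.ofReal ∘ b) (Complex.ofReal ∘ e)
  have hMred : ∀ z ∈ spectrum ℂ Mred, z.re < 0 := by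
    have : (borderedMatrix A b e).map Complex.ofReal = Mred :=
      borderedMatrix_map Complex.ofRealHom A b e
    rwa [HurwitzStable, this] at hred
  obtain ⟨R, hR⟩ := exists_norm_le_of_mulVec_add_eq_smul (A.map Complex.ofReal)
    (Complex.ofReal ∘ b) (Complex.ofReal ∘ e) ‖(c : ℂ)‖
  set K := {z : ℂ | 0 ≤ z.re} ∩ Metric.closedBall 0 R
  have hK : IsCompact K :=
    (isCompact_closedBall 0 R).inter_left (isClosed_le continuous_const Complex.continuous_re)
  obtain ⟨C, hC⟩ := hK.exists_bound_inv_smul_one_sub_apply Mred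
    (fun z hz hmem => (hMred z hmem).not_ge hz.1) (.inr 0) (.inr 0)
  refine ⟨max (‖(c : ℂ)‖ * R * C) 1, by positivity, fun s hs z hz => ?_⟩
  have hs0 : 0 < s := (one_pos.trans_le (le_max_right _ _)).trans hs
  by_contra! hre
  have hzs : z + s ≠ 0 := fun h => by
    have := congrArg Complex.re h
    simp only [Complex.add_re, Complex.ofReal_re, Complex.zero_re] at this
    linarith
  have hmap : (closedLoopMatrix A b e s c).map Complex.ofReal =
      closedLoopMatrix (A.map Complex.ofReal) (Complex.ofReal ∘ b) (Complex.ofReal ∘ e) s c :=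
    closedLoopMatrix_map Complex.ofRealHom A b e s c
  rw [hmap, mem_spectrum_iff_exists_mulVec_eq_smul] at hz
  obtain ⟨v, hv0, hv⟩ := hz
  rcases closedLoopMatrix_eigenvector_cases hv hv0 hzs with ⟨x, hx0, hx⟩ | ⟨y, hy, he⟩
  · exact (hA z ((mem_spectrum_iff_exists_mulVec_eq_smul _ z).mpr ⟨x, hx0, hx⟩)).not_ge hre
  set ε := z * c / (z + s)
  obtain ⟨hε, hεs⟩ := Complex.norm_mul_div_add_ofReal_le hre hs0 c
  have hzR : ‖z‖ ≤ R := hR z y hy (by rwa [he, add_sub_cancel_left])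
  have hG := inv_smul_one_sub_borderedMatrix_inr_inr_mul hy he <| isUnit_iff_ne_zero.mpr <|
    (Mred.notMem_spectrum_iff_det_ne_zero z).mp fun h => (hMred z h).not_ge hre
  have hGC := hC z ⟨hre, mem_closedBall_zero_iff.mpr hzR⟩
  have hGε : ‖(z • 1 - Mred)⁻¹ (.inr 0) (.inr 0)‖ * ‖ε‖ = 1 := by
    rw [← norm_mul, hG, norm_neg, norm_one]
  have hC0 : 0 ≤ C := (norm_nonneg _).trans hGC
  -- `1 = ‖G‖ ‖ε‖` with `G` bounded on `K` and `‖ε‖ ≤ ‖z‖ ‖c‖ / s`, so `s` cannot be large.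
  have : s ≤ ‖(c : ℂ)‖ * R * C := by
    calc s = ‖(z • 1 - Mred)⁻¹ (.inr 0) (.inr 0)‖ * (s * ‖ε‖) := by
          rw [mul_left_comm, hGε, mul_one]
      _ ≤ C * (‖z‖ * ‖(c : ℂ)‖) := by gcongr
      _ ≤ ‖(c : ℂ)‖ * R * C := by
          nlinarith [mul_le_mul_of_nonneg_left hzR (mul_nonneg hC0 (norm_nonneg (c : ℂ)))]
  exact hs.not_ge (this.trans (le_max_left _ _))

theorem stmt6_general (n : ℕ) (Abar : Matrix (Fin (n+1)) (Fin (n+1)) ℝ)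
    (hHur : HurwitzStable Abar)
    (kp μ r u : ℝ) (hu : 0 < u)
    (hred : HurwitzStable (Matrix.fromBlocks Abar
        (Matrix.of fun (i : Fin (n+1)) (_ : Fin 1) =>
          -(kp * r) * (Pi.single (Fin.last n) 1 : Fin (n+1) → ℝ) i)
        (Matrix.of fun (_ : Fin 1) (j : Fin (n+1)) =>
          (Pi.single (Fin.last n) 1 : Fin (n+1) → ℝ) j)
        (0 : Matrix (Fin 1) (Fin 1) ℝ))) :
    ∃ N > 0, ∀ η : ℝ, N < η →
      HurwitzStable (Matrix.fromBlocks Abar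
        (Matrix.of fun (i : Fin (n+1)) (j : Fin 2) =>
          if j = 1 then -(kp * r) * (Pi.single (Fin.last n) 1 : Fin (n+1) → ℝ) i else 0)
        (Matrix.of fun (i : Fin 2) (j : Fin (n+1)) =>
          if i = 1 then (Pi.single (Fin.last n) 1 : Fin (n+1) → ℝ) j else 0)
        !![-(η * u), -(μ * kp / u); -(η * u), -(μ * kp / u)]) := by
  obtain ⟨S, hS, hstable⟩ := exists_hurwitzStable_closedLoopMatrix Abar _ _ (μ * kp / u) hHur hred
  exact ⟨S / u, div_pos hS hu, fun η hη => hstable (η * u) ((div_lt_iff₀ hu).mp hη)⟩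

/-- Proposition 6 of the paper: if in addition the reduced (n+1)×(n+1) matrix
[[Ā, −k_p r eₙ], [eₙᵀ, 0]] is Hurwitz stable, then the closed-loop Jacobian of the
p-type AIC is Hurwitz stable for all sufficiently large η. -/
theorem stmt6 (n : ℕ) (Abar : Matrix (Fin (n+1)) (Fin (n+1)) ℝ)
    (hMetz : Metzler Abar) (hHur : HurwitzStable Abar)
    (kp μ r u : ℝ) (hkp : 0 < kp) (hμ : 0 < μ) (hr : 0 < r) (hu : 0 < u)
    (hred : HurwitzStable (Matrix.fromBlocks Abar
        (Matrix.of fun (i : Fin (n+1)) (_ : Fin 1) =>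
          -(kp * r) * (Pi.single (Fin.last n) 1 : Fin (n+1) → ℝ) i)
        (Matrix.of fun (_ : Fin 1) (j : Fin (n+1)) =>
          (Pi.single (Fin.last n) 1 : Fin (n+1) → ℝ) j)
        (0 : Matrix (Fin 1) (Fin 1) ℝ))) :
    ∃ N > 0, ∀ η : ℝ, N < η →
      HurwitzStable (Matrix.fromBlocks Abar
        (Matrix.of fun (i : Fin (n+1)) (j : Fin 2) =>
          if j = 1 then -(kp * r) * (Pi.single (Fin.last n) 1 : Fin (n+1) → ℝ) i else 0)
        (Matrix.of fun (i : Fin 2) (j : Fin (n+1)) =>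
          if i = 1 then (Pi.single (Fin.last n) 1 : Fin (n+1) → ℝ) j else 0)
        !![-(η * u), -(μ * kp / u); -(η * u), -(μ * kp / u)]) :=
  stmt6_general n Abar hHur kp μ r u hu hred
end

section
/- Let n ≥ 2 and let M ∈ ℝ^{n×n} be Metzler and Hurwitz stable. Then the leading principal (n−1)×(n−1) submatrix M₁₁ of M (obtained by deleting the last row and column) is Hurwitz stable, and the bottom-right entry M_{nn} is negative. -/
/-!
For a Metzler matrix `M` and small `t > 0`, the matrix `1 + t • M` is entrywise nonnegative and,
by Hurwitz stability, has its spectrum in the open unit disc. So the Neumann series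
`∑ (1 + t • M) ^ n = -(t • M)⁻¹` converges and is nonnegative, and `x = -M⁻¹ 1` is a nonnegative
vector with `M x = -1`; it is even positive, as the off-diagonal entries only add to `(M x) i`.
Conversely, a positive `x` with `M x < 0` certifies Hurwitz stability: apply Gershgorin's theorem
to `diag(x)⁻¹ M diag(x)`, whose rows have negative sums. This certificate restricts to principal
submatrices, since `M₁₁ x₁ ≤ (M x)₁`, and `M_nn x_n ≤ (M x)_n < 0` gives `M_nn < 0`.
-/

open Matrix

open Filter Topology Finset Function
open scoped NNReal

theorem summable_pow_of_spectrum_norm_lt_one {A : Type*} [NormedRing A] [NormedAlgebra ℂ A]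
    [CompleteSpace A] {a : A} (h : ∀ z ∈ spectrum ℂ a, ‖z‖ < 1) : Summable (a ^ ·) := by
  nontriviality A
  have hρ : spectralRadius ℂ a < (1 : ℝ≥0) :=
    spectrum.spectralRadius_lt_of_forall_lt a fun z hz => by
      rw [← NNReal.coe_lt_coe, coe_nnnorm]
      exact_mod_cast h z hz
  obtain ⟨r, hr1, hr⟩ := ENNReal.lt_iff_exists_nnreal_btwn.mp
    (ENNReal.one_lt_inv.mpr (by simpa using hρ))
  -- `z ↦ (1 - z • a)⁻¹` is analytic on the disc of radius `1 / ρ(a) > 1`, and its Taylor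
  -- coefficients at `0` are the powers `a ^ n`.
  have hp := (spectrum.hasFPowerSeriesOnBall_inverse_one_sub_smul ℂ a).exchange_radius
    ((spectrum.differentiableOn_inverse_one_sub_smul hr).hasFPowerSeriesOnBall
      (by simpa using zero_lt_one.trans hr1))
  exact ⟨_, by simpa using hp.hasSum (y := 1) (by simpa using hr1)⟩

theorem Complex.eventually_norm_one_add_mul_lt_one {w : ℂ} (hw : w.re < 0) :
    ∀ᶠ t : ℝ in 𝓝[>] 0, ‖1 + t * w‖ < 1 := by
  have hsq : 0 < Complex.normSq w := Complex.normSq_pos.mpr fun h => by simp [h] at hw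
  filter_upwards [nhdsWithin_le_nhds (eventually_lt_nhds (div_pos (by linarith) hsq :
    0 < -2 * w.re / Complex.normSq w)), self_mem_nhdsWithin] with t ht (htpos : 0 < t)
  rw [lt_div_iff₀ hsq, Complex.normSq_apply] at ht
  rw [← sq_lt_one_iff₀ (norm_nonneg _), Complex.sq_norm, Complex.normSq_apply]
  simp only [Complex.add_re, Complex.one_re, Complex.mul_re, Complex.ofReal_re,
    Complex.ofReal_im, Complex.add_im, Complex.one_im, Complex.mul_im]
  nlinarith

section

variable {m : Type*} [Fintype m]

theorem Metzler.submatrix {n : Type*} [Fintype n] {M : Matrix m m ℝ} (hM : Metzler M)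
    {e : n → m} (he : Injective e) : Metzler (M.submatrix e e) :=
  fun _ _ hij => hM _ _ (he.ne hij)

theorem Metzler.submatrix_mulVec_le {n : Type*} [Fintype n] {M : Matrix m m ℝ} (hM : Metzler M)
    {e : n → m} (he : Injective e) {x : m → ℝ} (hx : ∀ j, 0 ≤ x j) (i : n) :
    (M.submatrix e e *ᵥ (x ∘ e)) i ≤ (M *ᵥ x) (e i) :=
  calc ∑ j, M (e i) (e j) * x (e j)
      = ∑ j ∈ univ.map ⟨e, he⟩, M (e i) j * x j :=
        (sum_map univ ⟨e, he⟩ fun j => M (e i) j * x j).symm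
    _ ≤ ∑ j, M (e i) j * x j := sum_le_sum_of_subset_of_nonneg (subset_univ _)
        fun j _ hj => mul_nonneg (hM _ _ fun hij => hj (hij ▸ mem_map_of_mem _ (mem_univ i)))
          (hx j)

theorem Metzler.diag_mul_le_mulVec {M : Matrix m m ℝ} (hM : Metzler M) {x : m → ℝ}
    (hx : ∀ j, 0 ≤ x j) (i : m) : M i i * x i ≤ (M *ᵥ x) i := by
  classical
  rw [Matrix.mulVec, dotProduct, ← add_sum_erase _ _ (mem_univ i)]
  exact le_add_of_nonneg_right <|
    sum_nonneg fun j hj => mul_nonneg (hM i j (ne_of_mem_erase hj).symm) (hx j)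

variable [DecidableEq m]

theorem Matrix.summable_pow_of_spectrum_map_ofReal {B : Matrix m m ℝ}
    (h : ∀ z ∈ spectrum ℂ (B.map Complex.ofReal), ‖z‖ < 1) : Summable (B ^ ·) := by
  let := Matrix.linftyOpNormedRing (n := m) (α := ℂ)
  let := Matrix.linftyOpNormedAlgebra (n := m) (R := ℂ) (α := ℂ)
  have hc := (summable_pow_of_spectrum_norm_lt_one h).map
    (AddMonoidHom.mapMatrix Complex.reAddGroupHom) (continuous_id.matrix_map Complex.continuous_re)
  have hpow (n : ℕ) : B.map Complex.ofReal ^ n = (B ^ n).map Complex.ofReal :=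
    (map_pow Complex.ofRealHom.mapMatrix B n).symm
  convert hc using 2 with n
  ext i j
  simp [hpow]

theorem Matrix.exists_nonneg_one_sub_mul_eq_one {B : Matrix m m ℝ} (hB : ∀ i j, 0 ≤ B i j)
    (h : ∀ z ∈ spectrum ℂ (B.map Complex.ofReal), ‖z‖ < 1) :
    ∃ S : Matrix m m ℝ, (∀ i j, 0 ≤ S i j) ∧ (1 - B) * S = 1 := by
  have hs := Matrix.summable_pow_of_spectrum_map_ofReal h
  exact ⟨∑' n, B ^ n, fun i j => (Pi.hasSum.mp (Pi.hasSum.mp hs.hasSum i) j).nonneg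
    fun k => Matrix.pow_apply_nonneg hB k i j, hs.one_sub_mul_tsum_pow⟩

theorem Metzler.eventually_one_add_smul_nonneg {M : Matrix m m ℝ} (hM : Metzler M) :
    ∀ᶠ t : ℝ in 𝓝[>] 0, ∀ i j, 0 ≤ (1 + t • M) i j := by
  have hdiag : ∀ i, ∀ᶠ t : ℝ in 𝓝[>] 0, 0 < 1 + t * M i i := fun i =>
    nhdsWithin_le_nhds <| ((continuous_const.add (continuous_id.mul continuous_const)).tendsto'
      (0 : ℝ) 1 (by simp)).eventually (lt_mem_nhds one_pos)
  filter_upwards [eventually_all.mpr hdiag, self_mem_nhdsWithin] with t ht (htpos : 0 < t) i j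
  rcases eq_or_ne i j with rfl | hij
  · simpa using (ht i).le
  · simpa [Matrix.one_apply_ne hij] using mul_nonneg htpos.le (hM i j hij)

theorem HurwitzStable.eventually_spectrum_one_add_smul {M : Matrix m m ℝ}
    (hH : HurwitzStable M) :
    ∀ᶠ t : ℝ in 𝓝[>] 0, ∀ z ∈ spectrum ℂ ((1 + t • M).map Complex.ofReal), ‖z‖ < 1 := by
  filter_upwards [(Matrix.finite_spectrum _).eventually_all.mpr
    fun w hw => Complex.eventually_norm_one_add_mul_lt_one (hH w hw), self_mem_nhdsWithin]
    with t ht (htpos : 0 < t) z hz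
  have hmap : (1 + t • M).map Complex.ofReal = algebraMap ℂ _ 1 +
      (Units.mk0 (t : ℂ) (by exact_mod_cast htpos.ne')) • M.map Complex.ofReal := by
    ext i j
    simp [Matrix.one_apply, Units.smul_def, apply_ite Complex.ofReal]
  rw [hmap, ← spectrum.singleton_add_eq, spectrum.unit_smul_eq_smul] at hz
  obtain ⟨_, rfl, _, ⟨w, hw, rfl⟩, rfl⟩ := hz
  exact ht w hw

theorem Metzler.exists_nonneg_mulVec_eq_neg_one {M : Matrix m m ℝ} (hM : Metzler M)
    (hH : HurwitzStable M) : ∃ x : m → ℝ, (∀ i, 0 ≤ x i) ∧ ∀ i, (M *ᵥ x) i = -1 := by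
  obtain ⟨t, ⟨hB, hBspec⟩, ht : 0 < t⟩ :=
    ((hM.eventually_one_add_smul_nonneg.and hH.eventually_spectrum_one_add_smul).and
      self_mem_nhdsWithin).exists
  obtain ⟨S, hS, hBS⟩ := Matrix.exists_nonneg_one_sub_mul_eq_one hB hBspec
  have hMS : M * (t • S) = -1 := by
    rw [sub_add_cancel_left, neg_mul, smul_mul_assoc] at hBS
    rw [mul_smul_comm, ← hBS, neg_neg]
  refine ⟨(t • S) *ᵥ fun _ => 1, fun i => ?_, fun i => ?_⟩
  · exact sum_nonneg fun j _ => by simpa using mul_nonneg ht.le (hS i j)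
  · simp [Matrix.mulVec_mulVec, hMS, Matrix.neg_mulVec]

theorem Metzler.exists_pos_mulVec_neg {M : Matrix m m ℝ} (hM : Metzler M)
    (hH : HurwitzStable M) : ∃ x : m → ℝ, (∀ i, 0 < x i) ∧ ∀ i, (M *ᵥ x) i < 0 := by
  obtain ⟨x, hx, hMx⟩ := hM.exists_nonneg_mulVec_eq_neg_one hH
  refine ⟨x, fun i => (hx i).lt_of_ne fun h => ?_, fun i => by simp [hMx]⟩
  have := hM.diag_mul_le_mulVec hx i
  rw [← h, mul_zero, hMx] at this
  norm_num at this

theorem Metzler.hurwitzStable_of_sum_lt_zero {M : Matrix m m ℝ} (hM : Metzler M)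
    (h : ∀ i, ∑ j, M i j < 0) : HurwitzStable M := by
  intro z hz
  rw [← Matrix.spectrum_toLin', ← Module.End.hasEigenvalue_iff_mem_spectrum] at hz
  obtain ⟨k, hk⟩ := eigenvalue_mem_ball hz
  have hrad : ∑ j ∈ univ.erase k, ‖M.map Complex.ofReal k j‖ = ∑ j ∈ univ.erase k, M k j :=
    sum_congr rfl fun j hj => by
      rw [Matrix.map_apply, Complex.norm_real,
        Real.norm_of_nonneg (hM k j (ne_of_mem_erase hj).symm)]
  rw [Metric.mem_closedBall, dist_eq_norm, hrad, Matrix.map_apply] at hk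
  have hrow := h k
  rw [← add_sum_erase _ _ (mem_univ k)] at hrow
  have hre := Complex.re_le_norm (z - M k k)
  rw [Complex.sub_re, Complex.ofReal_re] at hre
  linarith

theorem hurwitzStable_diagonal_inv_mul_mul_diagonal_iff {M : Matrix m m ℝ} {d : m → ℝ}
    (hd : ∀ i, d i ≠ 0) :
    HurwitzStable (diagonal d⁻¹ * M * diagonal d) ↔ HurwitzStable M := by
  let u : (Matrix m m ℂ)ˣ :=
    { val := diagonal fun i => (d i : ℂ)
      inv := diagonal fun i => (d i : ℂ)⁻¹
      val_inv := by simp [diagonal_mul_diagonal, hd]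
      inv_val := by simp [diagonal_mul_diagonal, hd] }
  have hmap : (diagonal d⁻¹ * M * diagonal d).map Complex.ofReal =
      (↑u⁻¹ : Matrix m m ℂ) * M.map Complex.ofReal * u := by
    ext i j
    simp [u, diagonal_mul, mul_diagonal]
  rw [HurwitzStable, HurwitzStable, hmap, spectrum.units_conjugate']

theorem Metzler.hurwitzStable_of_mulVec_neg {M : Matrix m m ℝ} (hM : Metzler M) {x : m → ℝ}
    (hx : ∀ i, 0 < x i) (hMx : ∀ i, (M *ᵥ x) i < 0) : HurwitzStable M := by
  have hconj : ∀ i j, (diagonal x⁻¹ * M * diagonal x) i j = (x i)⁻¹ * (M i j * x j) := by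
    simp [diagonal_mul, mul_diagonal, mul_assoc]
  rw [← hurwitzStable_diagonal_inv_mul_mul_diagonal_iff fun i => (hx i).ne']
  refine Metzler.hurwitzStable_of_sum_lt_zero (fun i j hij => ?_) fun i => ?_
  · rw [hconj]
    exact mul_nonneg (inv_pos.mpr (hx i)).le (mul_nonneg (hM i j hij) (hx j).le)
  · simp only [hconj, ← mul_sum]
    exact mul_neg_of_pos_of_neg (inv_pos.mpr (hx i)) (hMx i)

theorem Metzler.hurwitzStable_submatrix {n : Type*} [Fintype n] [DecidableEq n]
    {M : Matrix m m ℝ} (hM : Metzler M) (hH : HurwitzStable M) {e : n → m} (he : Injective e) :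
    HurwitzStable (M.submatrix e e) := by
  obtain ⟨x, hx, hMx⟩ := hM.exists_pos_mulVec_neg hH
  exact (hM.submatrix he).hurwitzStable_of_mulVec_neg (fun i => hx (e i)) fun i =>
    (hM.submatrix_mulVec_le he (fun j => (hx j).le) i).trans_lt (hMx (e i))

theorem Metzler.diag_neg {M : Matrix m m ℝ} (hM : Metzler M) (hH : HurwitzStable M) (i : m) :
    M i i < 0 := by
  obtain ⟨x, hx, hMx⟩ := hM.exists_pos_mulVec_neg hH
  exact neg_of_mul_neg_left ((hM.diag_mul_le_mulVec (fun j => (hx j).le) i).trans_lt (hMx i))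
    (hx i).le

end

/-- Lemma 1 of the paper (second part): for a Metzler Hurwitz stable matrix, the leading
principal submatrix is Hurwitz stable and the bottom-right entry is negative. -/
theorem stmt9 (n : ℕ) (M : Matrix (Fin (n+2)) (Fin (n+2)) ℝ)
    (hMetz : Metzler M) (hHur : HurwitzStable M) :
    HurwitzStable (M.submatrix Fin.castSucc Fin.castSucc) ∧
    M (Fin.last (n+1)) (Fin.last (n+1)) < 0 :=
  ⟨hMetz.hurwitzStable_submatrix hHur (Fin.castSucc_injective _), hMetz.diag_neg hHur _⟩
end

section
/- Let n ≥ 2, let J ∈ ℝ^{n×n}, let u* > 0, μ > 0, and r > 0, and set Ā := J − u* eₙeₙᵀ. Assume: (1) there exists a symmetric positive definite matrix P₁ ∈ ℝ^{(n−1)×(n−1)} such that, with P := diag(P₁, 1) ∈ ℝ^{n×n}, the matrix ĀᵀP + PĀ is negative definite; and (2) Ā is invertible and −eₙᵀĀ⁻¹eₙ > 0. Then for all η > 0 and all k_p > 0, the (n+2)×(n+2) matrix [[Ā, 0, −k_p r eₙ], [0, −η u*, −μ k_p/u*], [eₙᵀ, −η u*, −μ k_p/u*]] is Hurwitz stable.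 -/
/-!
Let `v = (x, y)` be an eigenvector of the closed-loop matrix for an eigenvalue `z` with
`0 ≤ Re z`. The Lyapunov certificate `P` for `Ā` gives
`0 < x* Q x = -2 Re z · x* P x - 2 k_p r · Re (conj y₁ · x_N)`, where `Q = -(ĀᵀP + PĀ)`;
here `P eₙ = eₙ` is what turns the feedback term into the output `x_N`. The controller,
seen as a system from its input `x_N` to its output `y₁`, is positive real on the closed
right half plane, so `Re (conj y₁ · x_N) ≥ 0`. Hence `x = 0`, and then `y = 0`.
-/

open Matrix

open ComplexConjugate

/-- With `k = k_p r`, `a = η u*` and `c = μ k_p / u*`, the Jacobian of the closed loop with the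
p-type antithetic integral controller, whose input and output act on the coordinate `o`. -/
def aicClosedLoop {m : Type*} [DecidableEq m] (A : Matrix m m ℝ) (o : m) (k a c : ℝ) :
    Matrix (m ⊕ Fin 2) (m ⊕ Fin 2) ℝ :=
  fromBlocks A
    (of fun i (j : Fin 2) ↦ if j = 1 then -k * (Pi.single o 1 : m → ℝ) i else 0)
    (of fun (i : Fin 2) j ↦ if i = 1 then (Pi.single o 1 : m → ℝ) j else 0)
    !![-a, -c; -a, -c]

section Quadratic

variable {m : Type*} [Fintype m]

lemma exists_mulVec_eq_smul_of_mem_spectrum {K : Type*} [Field K] [DecidableEq m]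
    {M : Matrix m m K} {z : K} (hz : z ∈ spectrum K M) : ∃ v ≠ 0, M *ᵥ v = z • v := by
  rw [← spectrum_toLin', ← Module.End.hasEigenvalue_iff_mem_spectrum] at hz
  obtain ⟨v, hv⟩ := hz.exists_hasEigenvector
  exact ⟨v, hv.2, by simpa using hv.apply_eq_smul⟩

lemma Matrix.PosDef.fromBlocks_zero {n R : Type*} [Fintype n] [CommRing R] [PartialOrder R]
    [StarRing R] [IsOrderedRing R] {A : Matrix m m R} {D : Matrix n n R} (hA : A.PosDef)
    (hD : D.PosDef) : (fromBlocks A 0 0 D).PosDef := by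
  refine .of_dotProduct_mulVec_pos (hA.isHermitian.fromBlocks (by simp) hD.isHermitian)
    fun v hv ↦ ?_
  rw [← Sum.elim_comp_inl_inr v, fromBlocks_mulVec]
  simp only [zero_mulVec, add_zero, zero_add, Function.star_sumElim, sumElim_dotProduct_sumElim]
  have hl := hA.posSemidef.dotProduct_mulVec_nonneg (v ∘ Sum.inl)
  have hr := hD.posSemidef.dotProduct_mulVec_nonneg (v ∘ Sum.inr)
  by_cases h : v ∘ Sum.inl = 0
  · have h' : v ∘ Sum.inr ≠ 0 := fun h' ↦ hv (by rw [← Sum.elim_comp_inl_inr v, h, h']; simp)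
    exact add_pos_of_nonneg_of_pos hl (hD.dotProduct_mulVec_pos h')
  · exact add_pos_of_pos_of_nonneg (hA.dotProduct_mulVec_pos h) hr

lemma Matrix.IsHermitian.star_dotProduct_mulVec {α : Type*} [CommSemiring α] [StarRing α]
    {P : Matrix m m α} (hP : P.IsHermitian) (x w : m → α) :
    star (star x ⬝ᵥ P *ᵥ w) = star w ⬝ᵥ P *ᵥ x := by
  rw [star_dotProduct, star_star, star_mulVec, hP.eq, dotProduct_mulVec]

lemma re_star_dotProduct_map_ofReal_mulVec (Q : Matrix m m ℝ) (x : m → ℂ) :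
    (star x ⬝ᵥ Q.map Complex.ofReal *ᵥ x).re =
      (fun i ↦ (x i).re) ⬝ᵥ Q *ᵥ (fun i ↦ (x i).re) +
        (fun i ↦ (x i).im) ⬝ᵥ Q *ᵥ (fun i ↦ (x i).im) := by
  simp only [dotProduct, mulVec, Complex.re_sum, Finset.mul_sum, ← Finset.sum_add_distrib]
  refine Finset.sum_congr rfl fun i _ ↦ Finset.sum_congr rfl fun j _ ↦ ?_
  simp

lemma Matrix.PosSemidef.re_star_dotProduct_map_ofReal_mulVec_nonneg {Q : Matrix m m ℝ}
    (hQ : Q.PosSemidef) (x : m → ℂ) : 0 ≤ (star x ⬝ᵥ Q.map Complex.ofReal *ᵥ x).re := by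
  rw [re_star_dotProduct_map_ofReal_mulVec]
  exact add_nonneg (hQ.dotProduct_mulVec_nonneg _) (hQ.dotProduct_mulVec_nonneg _)

lemma Matrix.PosDef.re_star_dotProduct_map_ofReal_mulVec_pos {Q : Matrix m m ℝ}
    (hQ : Q.PosDef) {x : m → ℂ} (hx : x ≠ 0) :
    0 < (star x ⬝ᵥ Q.map Complex.ofReal *ᵥ x).re := by
  rw [re_star_dotProduct_map_ofReal_mulVec]
  have hre := hQ.posSemidef.dotProduct_mulVec_nonneg (fun i ↦ (x i).re)
  have him := hQ.posSemidef.dotProduct_mulVec_nonneg (fun i ↦ (x i).im)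
  simp only [star_trivial] at hre him
  by_cases h : (fun i ↦ (x i).re) = 0
  · have h' : (fun i ↦ (x i).im) ≠ 0 := fun h' ↦ hx <| funext fun i ↦
      Complex.ext (congrFun h i) (congrFun h' i)
    exact add_pos_of_nonneg_of_pos hre (hQ.dotProduct_mulVec_pos h')
  · exact add_pos_of_pos_of_nonneg (hQ.dotProduct_mulVec_pos h) him

lemma map_ofReal_transpose_mul_add_mul (A P : Matrix m m ℝ) :
    (Aᵀ * P + P * A).map Complex.ofReal =
      (A.map Complex.ofReal)ᴴ * P.map Complex.ofReal +
        P.map Complex.ofReal * A.map Complex.ofReal := by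
  ext i j
  simp [mul_apply]

lemma re_star_dotProduct_conjTranspose_mul_add_mul_mulVec {A P : Matrix m m ℂ}
    (hP : P.IsHermitian) {x w : m → ℂ} {z : ℂ} (hx : A *ᵥ x = z • x + w) :
    (star x ⬝ᵥ (Aᴴ * P + P * A) *ᵥ x).re =
      2 * z.re * (star x ⬝ᵥ P *ᵥ x).re + 2 * (star x ⬝ᵥ P *ᵥ w).re := by
  have hAx : star x ⬝ᵥ (Aᴴ * P) *ᵥ x = star (star x ⬝ᵥ P *ᵥ (A *ᵥ x)) := by
    rw [hP.star_dotProduct_mulVec, ← mulVec_mulVec, dotProduct_mulVec, ← star_mulVec,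
      dotProduct_mulVec]
  have hxPx : star (star x ⬝ᵥ P *ᵥ x) = star x ⬝ᵥ P *ᵥ x := hP.star_dotProduct_mulVec x x
  rw [add_mulVec, dotProduct_add, hAx, ← mulVec_mulVec, hx, mulVec_add, mulVec_smul,
    dotProduct_add, dotProduct_smul, star_add, star_smul, hxPx]
  simp only [Complex.add_re, smul_eq_mul, Complex.star_def, Complex.mul_re, Complex.conj_re,
    Complex.conj_im, Complex.conj_eq_iff_im.mp hxPx]
  ring

end Quadratic

lemma re_conj_mul_controller_input_nonneg {z y₀ y₁ : ℂ} {a c : ℝ} (hz : 0 ≤ z.re)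
    (ha : 0 < a) (hc : 0 ≤ c) (hy : (z + a) * y₀ = -(c * y₁)) :
    0 ≤ (conj y₁ * ((z + c) * y₁ + a * y₀)).re := by
  set d := z + a
  have hdre : d.re = z.re + a := by simp [d]
  have hd : 0 < Complex.normSq d := Complex.normSq_pos.mpr fun h ↦ by
    rw [h, Complex.zero_re] at hdre; linarith
  have had : a * d.re ≤ Complex.normSq d := by nlinarith [Complex.re_sq_le_normSq d]
  have key : conj y₁ * ((z + c) * y₁ + a * y₀) * Complex.normSq d =
      Complex.normSq y₁ * ((z + c) * Complex.normSq d - a * c * conj d) := by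
    linear_combination (a * conj y₁ * conj d) * hy - (a * conj y₁ * y₀) * Complex.mul_conj d
      + ((z + c) * Complex.normSq d - a * c * conj d) * Complex.mul_conj y₁
  have hre : (conj y₁ * ((z + c) * y₁ + a * y₀)).re * Complex.normSq d =
      Complex.normSq y₁ * (z.re * Complex.normSq d + c * (Complex.normSq d - a * d.re)) := by
    have h := congrArg Complex.re key
    rw [Complex.re_mul_ofReal, Complex.re_ofReal_mul] at h
    rw [h]
    congr 1
    simp
    ring
  refine nonneg_of_mul_nonneg_left ?_ hd
  rw [hre]
  exact mul_nonneg (Complex.normSq_nonneg _)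
    (add_nonneg (mul_nonneg hz hd.le) (mul_nonneg hc (sub_nonneg.mpr had)))

section ClosedLoop

variable {m : Type*} [Fintype m] [DecidableEq m]

lemma map_ofReal_mulVec_single {P : Matrix m m ℝ} {o : m}
    (hPo : P *ᵥ Pi.single o 1 = Pi.single o 1) (t : ℂ) :
    P.map Complex.ofReal *ᵥ Pi.single o t = Pi.single o t := by
  ext i
  have h := congrFun hPo i
  rw [mulVec_single_one, col_apply] at h
  by_cases hi : i = o
  · subst hi; simp_all [mulVec_single]
  · simp [mulVec_single, h, hi]

lemma aicClosedLoop_mulVec_eq_smul {A : Matrix m m ℝ} {o : m} {k a c : ℝ} {x : m → ℂ}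
    {y : Fin 2 → ℂ} {z : ℂ}
    (h : (aicClosedLoop A o k a c).map Complex.ofReal *ᵥ Sum.elim x y = z • Sum.elim x y) :
    A.map Complex.ofReal *ᵥ x = z • x + Pi.single o (k * y 1) ∧
      (z + a) * y 0 = -(c * y 1) ∧ x o = (z + c) * y 1 + a * y 0 := by
  rw [aicClosedLoop, fromBlocks_map, fromBlocks_mulVec] at h
  have hx i := congrFun h (Sum.inl i)
  have hy0 := congrFun h (Sum.inr 0)
  have hy1 := congrFun h (Sum.inr 1)
  simp only [mulVec, dotProduct, Fin.sum_univ_two, Pi.single_apply, Sum.elim_inl, Sum.elim_inr,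
    Sum.elim_comp_inl, Sum.elim_comp_inr, Pi.add_apply, Pi.smul_apply, smul_eq_mul, map_apply,
    of_apply] at hx hy0 hy1
  simp [apply_ite Complex.ofReal] at hx hy0 hy1
  refine ⟨funext fun i ↦ ?_, by linear_combination -hy0, by linear_combination hy1⟩
  have hxi := hx i
  by_cases hi : i = o <;> simp [mulVec, dotProduct, hi] at hxi ⊢ <;> linear_combination hxi

lemma eq_zero_of_lyapunov_of_re_conj_mul_nonneg {A P : Matrix m m ℝ} {o : m}
    (hP : P.PosDef) (hPo : P *ᵥ Pi.single o 1 = Pi.single o 1)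
    (hQ : (-(Aᵀ * P + P * A)).PosDef) {k : ℝ} (hk : 0 < k) {x : m → ℂ} {z t : ℂ}
    (hz : 0 ≤ z.re) (hx : A.map Complex.ofReal *ᵥ x = z • x + Pi.single o (k * t))
    (ht : 0 ≤ (conj t * x o).re) : x = 0 := by
  by_contra hx0
  have hPC : (P.map Complex.ofReal).IsHermitian := hP.isHermitian.map _ fun _ ↦ by simp
  have hQx := hQ.re_star_dotProduct_map_ofReal_mulVec_pos hx0
  rw [Matrix.map_neg _ Complex.ofReal_neg, neg_mulVec, dotProduct_neg, Complex.neg_re,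
    map_ofReal_transpose_mul_add_mul, re_star_dotProduct_conjTranspose_mul_add_mul_mulVec hPC hx,
    map_ofReal_mulVec_single hPo, dotProduct_single] at hQx
  have hfeedback : (star x o * (k * t)).re = k * (conj t * x o).re := by
    simp [Complex.mul_re, Complex.mul_im]
    ring
  have hxPx := hP.posSemidef.re_star_dotProduct_map_ofReal_mulVec_nonneg x
  rw [hfeedback] at hQx
  nlinarith [mul_nonneg hz hxPx, mul_nonneg hk.le ht]

theorem hurwitzStable_aicClosedLoop {A P : Matrix m m ℝ} {o : m} (hP : P.PosDef)
    (hPo : P *ᵥ Pi.single o 1 = Pi.single o 1) (hQ : (-(Aᵀ * P + P * A)).PosDef)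
    {k a c : ℝ} (hk : 0 < k) (ha : 0 < a) (hc : 0 ≤ c) :
    HurwitzStable (aicClosedLoop A o k a c) := by
  intro z hz
  by_contra! hre
  obtain ⟨v, hv, hMv⟩ := exists_mulVec_eq_smul_of_mem_spectrum hz
  rw [← Sum.elim_comp_inl_inr v] at hv hMv
  obtain ⟨hAx, hctrl, hxo⟩ := aicClosedLoop_mulVec_eq_smul hMv
  have hx : v ∘ Sum.inl = 0 := eq_zero_of_lyapunov_of_re_conj_mul_nonneg hP hPo hQ hk hre hAx
    (hxo ▸ re_conj_mul_controller_input_nonneg hre ha hc hctrl)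
  have hy1 : v (Sum.inr 1) = 0 := by
    simpa [hx, hk.ne'] using (congrFun hAx o).symm
  have hy0 : v (Sum.inr 0) = 0 := by
    have hza : z + a ≠ 0 := fun h ↦ by
      have := congrArg Complex.re h
      simp at this
      linarith
    simpa [hy1, hza] using hctrl
  refine hv (funext fun i ↦ ?_)
  rcases i with i | i
  · exact congrFun hx i
  · fin_cases i <;> assumption

end ClosedLoop

theorem stmt16_general (n : ℕ)
    (u μ r : ℝ) (hu : 0 < u) (hμ : 0 < μ) (hr : 0 < r)
    (Abar : Matrix (Fin (n+1) ⊕ Fin 1) (Fin (n+1) ⊕ Fin 1) ℝ)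
    (h1 : ∃ P₁ : Matrix (Fin (n+1)) (Fin (n+1)) ℝ, P₁.PosDef ∧
      (-(Abarᵀ * Matrix.fromBlocks P₁ 0 0 (1 : Matrix (Fin 1) (Fin 1) ℝ)
          + Matrix.fromBlocks P₁ 0 0 (1 : Matrix (Fin 1) (Fin 1) ℝ) * Abar)).PosDef) :
    ∀ η kp : ℝ, 0 < η → 0 < kp →
      HurwitzStable (Matrix.fromBlocks Abar
        (Matrix.of fun (i : Fin (n+1) ⊕ Fin 1) (j : Fin 2) =>
          if j = 1 then -(kp * r) * (Pi.single (Sum.inr 0) 1 : Fin (n+1) ⊕ Fin 1 → ℝ) i else 0)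
        (Matrix.of fun (i : Fin 2) (j : Fin (n+1) ⊕ Fin 1) =>
          if i = 1 then (Pi.single (Sum.inr 0) 1 : Fin (n+1) ⊕ Fin 1 → ℝ) j else 0)
        !![-(η * u), -(μ * kp / u); -(η * u), -(μ * kp / u)]) := by
  obtain ⟨P₁, hP₁, hQ⟩ := h1
  intro η kp hη hkp
  have hPo : fromBlocks P₁ 0 0 (1 : Matrix (Fin 1) (Fin 1) ℝ) *ᵥ Pi.single (Sum.inr 0) 1 =
      Pi.single (Sum.inr 0) 1 := by
    ext (i | i)
    · simp [fromBlocks, mulVec_single]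
    · simp [fromBlocks, mulVec_single, Fin.fin_one_eq_zero i]
  exact hurwitzStable_aicClosedLoop (hP₁.fromBlocks_zero .one) hPo hQ (mul_pos hkp hr)
    (mul_pos hη hu) (by positivity)

/-- Theorem 5 of the paper (nonlinear case): if the shifted Jacobian Ā = J − u* eₙeₙᵀ
admits a block-diagonal Lyapunov certificate P = diag(P₁, 1) and the static gain
−eₙᵀĀ⁻¹eₙ is positive, then the closed-loop Jacobian of the p-type AIC is Hurwitz stable
for all controller parameters η, k_p > 0.  The state index set is Fin (n+1) ⊕ Fin 1,
whose last element Sum.inr 0 plays the role of the output coordinate. -/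
theorem stmt16 (n : ℕ) (J : Matrix (Fin (n+1) ⊕ Fin 1) (Fin (n+1) ⊕ Fin 1) ℝ)
    (u μ r : ℝ) (hu : 0 < u) (hμ : 0 < μ) (hr : 0 < r)
    (Abar : Matrix (Fin (n+1) ⊕ Fin 1) (Fin (n+1) ⊕ Fin 1) ℝ)
    (hAbar : Abar = J - u • Matrix.vecMulVec
      (Pi.single (Sum.inr 0) 1 : Fin (n+1) ⊕ Fin 1 → ℝ)
      (Pi.single (Sum.inr 0) 1 : Fin (n+1) ⊕ Fin 1 → ℝ))
    (h1 : ∃ P₁ : Matrix (Fin (n+1)) (Fin (n+1)) ℝ, P₁.PosDef ∧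
      (-(Abarᵀ * Matrix.fromBlocks P₁ 0 0 (1 : Matrix (Fin 1) (Fin 1) ℝ)
          + Matrix.fromBlocks P₁ 0 0 (1 : Matrix (Fin 1) (Fin 1) ℝ) * Abar)).PosDef)
    (h2a : IsUnit Abar.det)
    (h2b : 0 < -(Abar⁻¹ (Sum.inr 0) (Sum.inr 0))) :
    ∀ η kp : ℝ, 0 < η → 0 < kp →
      HurwitzStable (Matrix.fromBlocks Abar
        (Matrix.of fun (i : Fin (n+1) ⊕ Fin 1) (j : Fin 2) =>
          if j = 1 then -(kp * r) * (Pi.single (Sum.inr 0) 1 : Fin (n+1) ⊕ Fin 1 → ℝ) i else 0)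
        (Matrix.of fun (i : Fin 2) (j : Fin (n+1) ⊕ Fin 1) =>
          if i = 1 then (Pi.single (Sum.inr 0) 1 : Fin (n+1) ⊕ Fin 1 → ℝ) j else 0)
        !![-(η * u), -(μ * kp / u); -(η * u), -(μ * kp / u)]) :=
  stmt16_general n u μ r hu hμ hr Abar h1
end
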